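/- Let q be a prime power and τ = (τ_1, …, τ_n) ∈ 𝒫^n, let α = (|τ_1|, …, |τ_n|), g = (I + J_{τ_1}, …, I + J_{τ_n}) ∈ GL(α, F_q), and X_g = {σ ∈ Rep(α, F_q) : g·σ = σ}. Then |X_g| = q^{Σ_{1≤i,j≤n} a_{ij} ⟨τ_i, τ_j⟩}, where ⟨λ,ν⟩ = Σ_{i,j} min(λ_i, ν_j). -/

import Mathlib

open Matrix BigOperators
open scoped Classical

/-- A partition: a weakly decreasing list of positive integers. -/
structure Partition' where
  parts : List ℕ
  sorted : parts.Pairwise (· ≥ ·)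
  pos : ∀ p ∈ parts, 0 < p

namespace Partition'

/-- `|λ|`, the size of the partition. -/
def size (l : Partition') : ℕ := l.parts.sum

/-- `⟨λ,ν⟩ = Σ_{i,j} min(λ_i, ν_j)`. -/
def pairMin (l m : Partition') : ℕ :=
  ∑ i : Fin l.parts.length, ∑ j : Fin m.parts.length,
    min (l.parts.get i) (m.parts.get j)

end Partition'

/-- The nilpotent Jordan matrix `J_λ` of a partition `λ`: the block-diagonal matrix whose
diagonal blocks are the nilpotent Jordan blocks of sizes the parts of `λ` (ones on the
superdiagonal), the blocks occupying consecutive intervals of indices in the order of the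
list of parts.  Concretely, the `(p,q)` entry is `1` exactly when `q = p + 1` and `p + 1`
is not a boundary between two consecutive blocks (i.e. `p + 1` is not a partial sum of the
list of parts), and `0` otherwise. -/
noncomputable def JordanMat (k : Type*) [Semiring k] (l : Partition') :
    Matrix (Fin l.size) (Fin l.size) k :=
  fun p q => if ((p : ℕ) + 1 = (q : ℕ) ∧ ∀ i : ℕ, (l.parts.take i).sum ≠ (p : ℕ) + 1)
    then 1 else 0

/-- A representation over `k` of the quiver `Γ` with vertices `{1,…,n}` and `a i j`
arrows from `i` to `j`, of dimension vector `α`: a `k`-linear map (matrix)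
`k^{α i} → k^{α j}` for each arrow. -/
abbrev QRep (n : ℕ) (a : Fin n → Fin n → ℕ) (k : Type*) [Field k] (α : Fin n → ℕ) :=
  ∀ i j : Fin n, Fin (a i j) → Matrix (Fin (α j)) (Fin (α i)) k

/-- The base-change action of `GL(α) = ∏_i GL(α_i)` on representations:
`(g·σ)_a = g_j σ_a g_i⁻¹` for an arrow `a : i → j`. -/
def glSmul {n : ℕ} {a : Fin n → Fin n → ℕ} {k : Type*} [Field k] {α : Fin n → ℕ}
    (g : ∀ i, GL (Fin (α i)) k) (σ : QRep n a k α) : QRep n a k α :=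
  fun i j t => (g j).val * σ i j t * ((g i)⁻¹).val

namespace CardFixedAux

open Partition'

variable {F : Type} [Field F] [Fintype F]

/-- partial sums of parts -/
def pS (l : Partition') (k : ℕ) : ℕ := (l.parts.take k).sum

lemma pS_succ (l : Partition') (k : ℕ) (hk : k < l.parts.length) :
    pS l (k + 1) = pS l k + l.parts.get ⟨k, hk⟩ := by
  rw [pS, pS, List.sum_take_succ l.parts k hk]
  rfl

lemma pS_succ' (l : Partition') (i : Fin l.parts.length) :
    pS l ((i : ℕ) + 1) = pS l i + l.parts.get i := by
  rw [pS_succ l i i.isLt]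

lemma part_pos (l : Partition') (i : Fin l.parts.length) : 0 < l.parts.get i :=
  l.pos _ (l.parts.get_mem _)

lemma pS_mono (l : Partition') : Monotone (pS l) := by
  apply monotone_nat_of_le_succ
  intro k
  by_cases hk : k < l.parts.length
  · rw [pS_succ l k hk]; omega
  · unfold pS
    rw [List.take_of_length_le (by omega), List.take_of_length_le (by omega)]

lemma pS_len (l : Partition') : pS l l.parts.length = l.size := by
  simp [pS, Partition'.size]

lemma pS_lt (l : Partition') (i : Fin l.parts.length) (p : Fin (l.parts.get i)) :
    pS l i + p < l.size := by
  have h1 : pS l i + p < pS l (i + 1) := by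
    rw [pS_succ' l i]
    have := p.isLt
    omega
  have h2 : pS l (i + 1) ≤ pS l l.parts.length := pS_mono l i.isLt
  rw [pS_len] at h2
  omega

/-- sigma index type for a partition -/
abbrev Sg (l : Partition') := Σ i : Fin l.parts.length, Fin (l.parts.get i)

noncomputable def embP (l : Partition') : Sg l ≃ Fin l.size :=
  Equiv.ofBijective (fun σ => ⟨pS l σ.1 + σ.2, pS_lt l σ.1 σ.2⟩) (by
    have aux : ∀ (i j : Fin l.parts.length) (p : Fin (l.parts.get i))
        (q : Fin (l.parts.get j)), (i : ℕ) < j → pS l i + p < pS l j + q := by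
      intro i j p q hij
      have h1 : pS l i + p < pS l (i + 1) := by
        rw [pS_succ' l i]; have := p.isLt; omega
      have h2 : pS l (i + 1) ≤ pS l j := pS_mono l hij
      omega
    rw [Fintype.bijective_iff_injective_and_card]
    constructor
    · rintro ⟨i, p⟩ ⟨j, q⟩ h
      simp only [Fin.mk.injEq] at h
      rcases lt_trichotomy (i : ℕ) (j : ℕ) with hij | hij | hij
      · exact absurd h (by have := aux i j p q hij; omega)
      · obtain rfl : i = j := Fin.ext hij
        have hpq : p = q := Fin.ext (by omega)
        rw [hpq]
      · exact absurd h (by have := aux j i q p hij; omega)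
    · simp only [Fintype.card_sigma, Fintype.card_fin]
      exact Fin.sum_univ_getElem l.parts)

lemma embP_coe (l : Partition') (σ : Sg l) :
    ((embP l σ : Fin l.size) : ℕ) = pS l σ.1 + σ.2 := rfl

lemma embP_coe' (l : Partition') (i : Fin l.parts.length) (p : Fin (l.parts.get i)) :
    ((embP l ⟨i, p⟩ : Fin l.size) : ℕ) = pS l i + p := rfl

/-- the Jordan matrix in sigma coordinates -/
def JS (F : Type) [Field F] (l : Partition') : Matrix (Sg l) (Sg l) F :=
  fun σ τ => if σ.1 = τ.1 ∧ (τ.2 : ℕ) = (σ.2 : ℕ) + 1 then 1 else 0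

lemma take_eq_pS (l : Partition') (k : ℕ) : (l.parts.take k).sum = pS l k := rfl

lemma jordan_submatrix (l : Partition') :
    (JordanMat F l).submatrix (embP l) (embP l) = JS F l := by
  ext ⟨i, p⟩ ⟨j, q⟩
  rw [Matrix.submatrix_apply, JordanMat, JS]
  by_cases h : i = j ∧ (q : ℕ) = (p : ℕ) + 1
  · obtain ⟨rfl, hq⟩ := h
    have hA : ((embP l ⟨i, p⟩ : Fin l.size) : ℕ) + 1 = ((embP l ⟨i, q⟩ : Fin l.size) : ℕ) ∧
        ∀ k : ℕ, (l.parts.take k).sum ≠ ((embP l ⟨i, p⟩ : Fin l.size) : ℕ) + 1 := by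
      constructor
      · rw [embP_coe', embP_coe']
        omega
      · intro k hk
        rw [take_eq_pS, embP_coe'] at hk
        rcases le_or_gt k i with h' | h'
        · have := pS_mono l h'; omega
        · have h2 := pS_mono l (show (i : ℕ) + 1 ≤ k from h')
          rw [pS_succ' l i] at h2
          have := q.isLt
          omega
    rw [if_pos hA, if_pos ⟨rfl, hq⟩]
  · rw [if_neg h, if_neg]
    rintro ⟨h1, h2⟩
    rw [embP_coe', embP_coe'] at h1
    rcases lt_or_eq_of_le (show (p : ℕ) + 1 ≤ l.parts.get i from p.isLt) with hp | hp
    · have he : embP l ⟨i, ⟨(p : ℕ) + 1, hp⟩⟩ = embP l ⟨j, q⟩ := by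
        apply Fin.ext
        rw [embP_coe', embP_coe']
        simp only [Fin.val_mk]
        omega
      have he2 := (embP l).injective he
      rw [Sigma.mk.inj_iff] at he2
      obtain ⟨rfl, he3⟩ := he2
      exact h ⟨rfl, by rw [← eq_of_heq he3]⟩
    · exact h2 (i + 1) (by rw [take_eq_pS, pS_succ' l i, embP_coe']; omega)

lemma JS_mul_apply (μ ν : Partition') (X : Matrix (Sg μ) (Sg ν) F) (σ : Sg μ) (τ : Sg ν) :
    (JS F μ * X) σ τ =
      if h : (σ.2 : ℕ) + 1 < μ.parts.get σ.1 then X ⟨σ.1, ⟨σ.2 + 1, h⟩⟩ τ else 0 := by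
  rw [Matrix.mul_apply]
  split_ifs with h
  · rw [Finset.sum_eq_single (⟨σ.1, ⟨(σ.2 : ℕ) + 1, h⟩⟩ : Sg μ)]
    · rw [JS]
      rw [if_pos ⟨rfl, rfl⟩, one_mul]
    · rintro ⟨j, q⟩ - hne
      rw [JS, if_neg, zero_mul]
      rintro ⟨h1, h2⟩
      apply hne
      subst h1
      exact congrArg (Sigma.mk σ.1) (Fin.ext h2)
    · intro hmem
      exact absurd (Finset.mem_univ _) hmem
  · apply Finset.sum_eq_zero
    rintro ⟨j, q⟩ -
    rw [JS, if_neg, zero_mul]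
    rintro ⟨h1, h2⟩
    subst h1
    exact h (h2 ▸ q.isLt)

lemma mul_JS_apply (μ ν : Partition') (X : Matrix (Sg μ) (Sg ν) F) (σ : Sg μ) (τ : Sg ν) :
    (X * JS F ν) σ τ =
      if 0 < (τ.2 : ℕ) then
        X σ ⟨τ.1, ⟨(τ.2 : ℕ) - 1, lt_of_le_of_lt (Nat.sub_le _ _) τ.2.isLt⟩⟩ else 0 := by
  rw [Matrix.mul_apply]
  split_ifs with h
  · rw [Finset.sum_eq_single
      (⟨τ.1, ⟨(τ.2 : ℕ) - 1, lt_of_le_of_lt (Nat.sub_le _ _) τ.2.isLt⟩⟩ : Sg ν)]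
    · rw [JS, if_pos ⟨rfl, (Nat.succ_pred_eq_of_pos h).symm⟩, mul_one]
    · rintro ⟨j, q⟩ - hne
      rw [JS, if_neg, mul_zero]
      rintro ⟨h1, h2⟩
      apply hne
      subst h1
      have h2' : (τ.2 : ℕ) = (q : ℕ) + 1 := h2
      exact congrArg (Sigma.mk _) (Fin.ext (by simp only [Fin.val_mk]; omega))
    · intro hmem
      exact absurd (Finset.mem_univ _) hmem
  · apply Finset.sum_eq_zero
    rintro ⟨j, q⟩ -
    rw [JS, if_neg, mul_zero]
    rintro ⟨h1, h2⟩
    have h2' : (τ.2 : ℕ) = (q : ℕ) + 1 := h2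
    omega

/-- parameter space -/
abbrev Prm (F : Type) [Field F] (μ ν : Partition') :=
  ∀ (i : Fin μ.parts.length) (j : Fin ν.parts.length),
    Fin (min (μ.parts.get i) (ν.parts.get j)) → F

/-- the matrix built from parameters -/
def matOf (μ ν : Partition') (c : Prm F μ ν) : Matrix (Sg μ) (Sg ν) F :=
  fun σ τ =>
    if h : (σ.2 : ℕ) + (ν.parts.get τ.1 - min (μ.parts.get σ.1) (ν.parts.get τ.1)) ≤ (τ.2 : ℕ)
    then c σ.1 τ.1 ⟨(τ.2 : ℕ) - (σ.2 : ℕ) -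
        (ν.parts.get τ.1 - min (μ.parts.get σ.1) (ν.parts.get τ.1)),
      by have := τ.2.isLt; omega⟩
    else 0

lemma Xc {μ ν : Partition'} (X : Matrix (Sg μ) (Sg ν) F)
    (i : Fin μ.parts.length) (j : Fin ν.parts.length) {p p' q q' : ℕ}
    (hp : p < μ.parts.get i) (hp' : p' < μ.parts.get i)
    (hq : q < ν.parts.get j) (hq' : q' < ν.parts.get j)
    (h1 : p = p') (h2 : q = q') :
    X ⟨i, ⟨p, hp⟩⟩ ⟨j, ⟨q, hq⟩⟩ = X ⟨i, ⟨p', hp'⟩⟩ ⟨j, ⟨q', hq'⟩⟩ := by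
  subst h1; subst h2; rfl

section rel
variable {μ ν : Partition'} {X : Matrix (Sg μ) (Sg ν) F}

lemma rel_pointwise (hX : JS F μ * X = X * JS F ν) (σ : Sg μ) (τ : Sg ν) :
    (if h : (σ.2 : ℕ) + 1 < μ.parts.get σ.1 then X ⟨σ.1, ⟨σ.2 + 1, h⟩⟩ τ else 0) =
      (if 0 < (τ.2 : ℕ) then
        X σ ⟨τ.1, ⟨(τ.2 : ℕ) - 1, lt_of_le_of_lt (Nat.sub_le _ _) τ.2.isLt⟩⟩ else 0) := by
  rw [← JS_mul_apply, ← mul_JS_apply, hX]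

lemma rel1 (hX : JS F μ * X = X * JS F ν) (i : Fin μ.parts.length) (j : Fin ν.parts.length)
    (p q : ℕ) (hp : p + 1 < μ.parts.get i) (hq : q < ν.parts.get j) (hq0 : 0 < q) :
    X ⟨i, ⟨p + 1, hp⟩⟩ ⟨j, ⟨q, hq⟩⟩ =
      X ⟨i, ⟨p, by omega⟩⟩ ⟨j, ⟨q - 1, by omega⟩⟩ := by
  have h := rel_pointwise hX ⟨i, ⟨p, by omega⟩⟩ ⟨j, ⟨q, hq⟩⟩
  rw [dif_pos (show (p : ℕ) + 1 < μ.parts.get i from hp), if_pos hq0] at h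
  exact h

lemma rel2 (hX : JS F μ * X = X * JS F ν) (i : Fin μ.parts.length) (j : Fin ν.parts.length)
    (p : ℕ) (hp : p + 1 < μ.parts.get i) (h0 : 0 < ν.parts.get j) :
    X ⟨i, ⟨p + 1, hp⟩⟩ ⟨j, ⟨0, h0⟩⟩ = 0 := by
  have h := rel_pointwise hX ⟨i, ⟨p, by omega⟩⟩ ⟨j, ⟨0, h0⟩⟩
  rw [dif_pos (show (p : ℕ) + 1 < μ.parts.get i from hp), if_neg (by simp)] at h
  exact h

lemma rel3 (hX : JS F μ * X = X * JS F ν) (i : Fin μ.parts.length) (j : Fin ν.parts.length)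
    (q : ℕ) (hq : q + 1 < ν.parts.get j) :
    X ⟨i, ⟨μ.parts.get i - 1, by have := part_pos μ i; omega⟩⟩ ⟨j, ⟨q, by omega⟩⟩ = 0 := by
  have h := rel_pointwise hX ⟨i, ⟨μ.parts.get i - 1, by have := part_pos μ i; omega⟩⟩
      ⟨j, ⟨q + 1, hq⟩⟩
  rw [dif_neg (by have := part_pos μ i; simp only [Fin.val_mk]; omega),
    if_pos (Nat.succ_pos q)] at h
  exact h.symm

lemma shift (hX : JS F μ * X = X * JS F ν) (i : Fin μ.parts.length) (j : Fin ν.parts.length)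
    (t p q : ℕ) (hp : p + t < μ.parts.get i) (hq : q + t < ν.parts.get j) :
    X ⟨i, ⟨p + t, hp⟩⟩ ⟨j, ⟨q + t, hq⟩⟩ =
      X ⟨i, ⟨p, by omega⟩⟩ ⟨j, ⟨q, by omega⟩⟩ := by
  induction t with
  | zero => exact Xc X i j _ _ _ _ rfl rfl
  | succ t ih =>
    have e1 : X ⟨i, ⟨p + (t + 1), hp⟩⟩ ⟨j, ⟨q + (t + 1), hq⟩⟩ =
        X ⟨i, ⟨p + t + 1, by omega⟩⟩ ⟨j, ⟨q + t + 1, by omega⟩⟩ :=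
      Xc X i j _ _ _ _ (by omega) (by omega)
    rw [e1, rel1 hX i j (p + t) (q + t + 1) (by omega) (by omega) (by omega)]
    have e2 : X ⟨i, ⟨p + t, by omega⟩⟩ ⟨j, ⟨q + t + 1 - 1, by omega⟩⟩ =
        X ⟨i, ⟨p + t, by omega⟩⟩ ⟨j, ⟨q + t, by omega⟩⟩ :=
      Xc X i j _ _ _ _ rfl (by omega)
    rw [e2, ih (by omega) (by omega)]

end rel

lemma matOf_rel (μ ν : Partition') (c : Prm F μ ν) :
    JS F μ * matOf μ ν c = matOf μ ν c * JS F ν := by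
  ext ⟨i, p⟩ ⟨j, q⟩
  rw [JS_mul_apply, mul_JS_apply]
  have hp := p.isLt
  have hq := q.isLt
  have hb := part_pos μ i
  have ha := part_pos ν j
  simp only [matOf]
  by_cases h1 : (p : ℕ) + 1 < μ.parts.get i <;> by_cases h2 : 0 < (q : ℕ)
  · rw [dif_pos h1, if_pos h2]
    split_ifs with h3 h4 h4
    · exact congrArg (c i j) (Fin.ext (by simp only [Fin.val_mk]; omega))
    · exact absurd h4 (by omega)
    · exact absurd h3 (by omega)
    · rfl
  · rw [dif_pos h1, if_neg h2]
    rw [dif_neg (by omega)]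
  · rw [dif_neg h1, if_pos h2]
    rw [dif_neg (by omega)]
  · rw [dif_neg h1, if_neg h2]

lemma matOf_eval (μ ν : Partition') (c : Prm F μ ν) (i : Fin μ.parts.length)
    (j : Fin ν.parts.length) (s : Fin (min (μ.parts.get i) (ν.parts.get j))) :
    matOf μ ν c
      ⟨i, ⟨min (μ.parts.get i) (ν.parts.get j) - 1 - s, by have := s.isLt; omega⟩⟩
      ⟨j, ⟨ν.parts.get j - 1, by have := part_pos ν j; omega⟩⟩ = c i j s := by
  have hs := s.isLt
  simp only [matOf, Fin.val_mk]
  rw [dif_pos (by omega)]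
  exact congrArg (c i j) (Fin.ext (by simp only [Fin.val_mk]; omega))

/-- recovered parameters -/
def cOf (μ ν : Partition') (X : Matrix (Sg μ) (Sg ν) F) : Prm F μ ν := fun i j s =>
  X ⟨i, ⟨min (μ.parts.get i) (ν.parts.get j) - 1 - s, by have := s.isLt; omega⟩⟩
    ⟨j, ⟨ν.parts.get j - 1, by have := part_pos ν j; omega⟩⟩

lemma matOf_cOf (μ ν : Partition') (X : Matrix (Sg μ) (Sg ν) F)
    (hX : JS F μ * X = X * JS F ν) : matOf μ ν (cOf μ ν X) = X := by
  ext ⟨i, p⟩ ⟨j, q⟩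
  have hp := p.isLt
  have hq := q.isLt
  have hb := part_pos μ i
  have ha := part_pos ν j
  have hm : 0 < min (μ.parts.get i) (ν.parts.get j) := lt_min hb ha
  simp only [matOf, cOf, Fin.val_mk]
  split_ifs with h
  · -- entry equals a parameter
    have e1 : X (⟨i, p⟩ : Sg μ) ⟨j, q⟩ =
        X ⟨i, ⟨0, hb⟩⟩ ⟨j, ⟨(q : ℕ) - (p : ℕ), by omega⟩⟩ := by
      rw [← shift hX i j (p : ℕ) 0 ((q : ℕ) - (p : ℕ)) (by omega) (by omega)]
      exact Xc X i j _ _ _ _ (by omega) (by omega)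
    have e2 : X ⟨i, ⟨min (μ.parts.get i) (ν.parts.get j) - 1 -
            ((q : ℕ) - (p : ℕ) - (ν.parts.get j - min (μ.parts.get i) (ν.parts.get j))),
            by omega⟩⟩
          ⟨j, ⟨ν.parts.get j - 1, by omega⟩⟩ =
        X ⟨i, ⟨0, hb⟩⟩ ⟨j, ⟨(q : ℕ) - (p : ℕ), by omega⟩⟩ := by
      rw [← shift hX i j (min (μ.parts.get i) (ν.parts.get j) - 1 -
        ((q : ℕ) - (p : ℕ) - (ν.parts.get j - min (μ.parts.get i) (ν.parts.get j))))
        0 ((q : ℕ) - (p : ℕ)) (by omega) (by omega)]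
      exact Xc X i j _ _ _ _ (by omega) (by omega)
    exact e2.trans e1.symm
  · -- entry is zero
    symm
    rcases lt_or_ge (q : ℕ) (p : ℕ) with hlt | hle
    · -- below the diagonal band
      have e1 : X (⟨i, p⟩ : Sg μ) ⟨j, q⟩ =
          X ⟨i, ⟨(p : ℕ) - (q : ℕ), by omega⟩⟩ ⟨j, ⟨0, ha⟩⟩ := by
        rw [← shift hX i j (q : ℕ) ((p : ℕ) - (q : ℕ)) 0 (by omega) (by omega)]
        exact Xc X i j _ _ _ _ (by omega) (by omega)
      have e2 : X ⟨i, ⟨(p : ℕ) - (q : ℕ), by omega⟩⟩ ⟨j, ⟨0, ha⟩⟩ =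
          X ⟨i, ⟨((p : ℕ) - (q : ℕ) - 1) + 1, by omega⟩⟩ ⟨j, ⟨0, ha⟩⟩ :=
        Xc X i j _ _ _ _ (by omega) rfl
      rw [e1, e2, rel2 hX i j ((p : ℕ) - (q : ℕ) - 1) (by omega) ha]
    · -- in the forced-zero part of the band
      have e1 : X (⟨i, p⟩ : Sg μ) ⟨j, q⟩ =
          X ⟨i, ⟨0, hb⟩⟩ ⟨j, ⟨(q : ℕ) - (p : ℕ), by omega⟩⟩ := by
        rw [← shift hX i j (p : ℕ) 0 ((q : ℕ) - (p : ℕ)) (by omega) (by omega)]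
        exact Xc X i j _ _ _ _ (by omega) (by omega)
      have e2 : X ⟨i, ⟨μ.parts.get i - 1, by omega⟩⟩
            ⟨j, ⟨(q : ℕ) - (p : ℕ) + (μ.parts.get i - 1), by omega⟩⟩ =
          X ⟨i, ⟨0, hb⟩⟩ ⟨j, ⟨(q : ℕ) - (p : ℕ), by omega⟩⟩ := by
        rw [← shift hX i j (μ.parts.get i - 1) 0 ((q : ℕ) - (p : ℕ)) (by omega) (by omega)]
        exact Xc X i j _ _ _ _ (by omega) (by omega)
      rw [e1, ← e2]
      exact rel3 hX i j ((q : ℕ) - (p : ℕ) + (μ.parts.get i - 1)) (by omega)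

lemma card_Prm (μ ν : Partition') :
    Nat.card (Prm F μ ν) = Fintype.card F ^ μ.pairMin ν := by
  rw [Nat.card_eq_fintype_card, Fintype.card_pi, Partition'.pairMin,
    ← Finset.prod_pow_eq_pow_sum]
  refine Finset.prod_congr rfl fun i _ => ?_
  rw [Fintype.card_pi, ← Finset.prod_pow_eq_pow_sum]
  refine Finset.prod_congr rfl fun j _ => ?_
  rw [Fintype.card_fun, Fintype.card_fin]

lemma count_sigma (μ ν : Partition') :
    Nat.card {X : Matrix (Sg μ) (Sg ν) F // JS F μ * X = X * JS F ν} =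
      Fintype.card F ^ μ.pairMin ν := by
  rw [← card_Prm μ ν]
  refine (Nat.card_congr (Equiv.ofBijective
    (fun c : Prm F μ ν => (⟨matOf μ ν c, matOf_rel μ ν c⟩ :
      {X : Matrix (Sg μ) (Sg ν) F // JS F μ * X = X * JS F ν})) ⟨?_, ?_⟩)).symm
  · intro c c' h
    have h' : matOf μ ν c = matOf μ ν c' := congrArg Subtype.val h
    funext i j s
    rw [← matOf_eval μ ν c i j s, ← matOf_eval μ ν c' i j s, h']
  · rintro ⟨X, hX⟩
    exact ⟨cOf μ ν X, Subtype.ext (matOf_cOf μ ν X hX)⟩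

lemma count_fin (μ ν : Partition') :
    Nat.card {X : Matrix (Fin μ.size) (Fin ν.size) F //
        JordanMat F μ * X = X * JordanMat F ν} =
      Fintype.card F ^ μ.pairMin ν := by
  rw [← count_sigma μ ν]
  apply Nat.card_congr
  refine Equiv.subtypeEquiv (Matrix.reindex (embP μ).symm (embP ν).symm) fun X => ?_
  simp only [Matrix.reindex_apply, Equiv.symm_symm]
  constructor
  · intro h
    calc JS F μ * X.submatrix (embP μ) (embP ν)
        = (JordanMat F μ).submatrix (embP μ) (embP μ) * X.submatrix (embP μ) (embP ν) := by
          rw [jordan_submatrix]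
      _ = (JordanMat F μ * X).submatrix (embP μ) (embP ν) :=
          Matrix.submatrix_mul_equiv _ _ _ _ _
      _ = (X * JordanMat F ν).submatrix (embP μ) (embP ν) := by rw [h]
      _ = X.submatrix (embP μ) (embP ν) * (JordanMat F ν).submatrix (embP ν) (embP ν) :=
          (Matrix.submatrix_mul_equiv _ _ _ _ _).symm
      _ = X.submatrix (embP μ) (embP ν) * JS F ν := by rw [jordan_submatrix]
  · intro h
    have h2 : (JordanMat F μ * X).submatrix (embP μ) (embP ν) =
        (X * JordanMat F ν).submatrix (embP μ) (embP ν) := by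
      rw [← Matrix.submatrix_mul_equiv (JordanMat F μ) X (embP μ) (embP μ) (embP ν),
        ← Matrix.submatrix_mul_equiv X (JordanMat F ν) (embP μ) (embP ν) (embP ν),
        jordan_submatrix, jordan_submatrix, h]
    ext P Q
    have h3 := Matrix.ext_iff.2 h2 ((embP μ).symm P) ((embP ν).symm Q)
    simpa using h3

lemma pairMin_comm (l m : Partition') : l.pairMin m = m.pairMin l := by
  rw [Partition'.pairMin, Partition'.pairMin, Finset.sum_comm]
  exact Finset.sum_congr rfl fun j _ => Finset.sum_congr rfl fun i _ => min_comm _ _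

end CardFixedAux

/-- The number of representations of dimension `α = (|τ_1|,…,|τ_n|)` fixed by
`g = (I + J_{τ_1},…,I + J_{τ_n})` is `q^{Σ_{i,j} a_{ij} ⟨τ_i,τ_j⟩}`,
where `⟨λ,ν⟩ = Σ_{i,j} min(λ_i,ν_j)`. -/
theorem card_fixed_reps (F : Type) [Field F] [Fintype F]
    (n : ℕ) (a : Fin n → Fin n → ℕ) (τ : Fin n → Partition')
    (g : ∀ i, GL (Fin ((τ i).size)) F)
    (hg : ∀ i, (g i).val = 1 + JordanMat F (τ i)) :
    Nat.card {σ : QRep n a F (fun i => (τ i).size) // glSmul g σ = σ} =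
      Fintype.card F ^ (∑ i, ∑ j, a i j * (τ i).pairMin (τ j)) := by
  have key : ∀ σ : QRep n a F (fun i => (τ i).size), glSmul g σ = σ ↔
      ∀ i j (t : Fin (a i j)),
        JordanMat F (τ j) * σ i j t = σ i j t * JordanMat F (τ i) := by
    intro σ
    rw [funext_iff]
    refine forall_congr' fun i => ?_
    rw [funext_iff]
    refine forall_congr' fun j => ?_
    rw [funext_iff]
    refine forall_congr' fun t => ?_
    show (g j).val * σ i j t * ((g i)⁻¹).val = σ i j t ↔ _
    have step1 : (g j).val * σ i j t * ((g i)⁻¹).val = σ i j t ↔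
        (g j).val * σ i j t = σ i j t * (g i).val := by
      constructor
      · intro h
        have h2 := congrArg (fun Y => Y * (g i).val) h
        simp only at h2
        rwa [Matrix.mul_assoc, Units.inv_mul, Matrix.mul_one] at h2
      · intro h
        rw [h, Matrix.mul_assoc, Units.mul_inv, Matrix.mul_one]
    rw [step1, hg i, hg j, Matrix.add_mul, Matrix.mul_add, Matrix.one_mul, Matrix.mul_one,
      add_right_inj]
  have E : {σ : QRep n a F (fun i => (τ i).size) // glSmul g σ = σ} ≃
      ∀ i j (t : Fin (a i j)), {X : Matrix (Fin ((τ j).size)) (Fin ((τ i).size)) F //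
        JordanMat F (τ j) * X = X * JordanMat F (τ i)} :=
    { toFun := fun σ i j t => ⟨σ.1 i j t, (key σ.1).1 σ.2 i j t⟩
      invFun := fun f => ⟨fun i j t => (f i j t).1, (key _).2 fun i j t => (f i j t).2⟩
      left_inv := fun σ => rfl
      right_inv := fun f => rfl }
  rw [Nat.card_congr E]
  rw [Nat.card_pi]
  rw [← Finset.prod_pow_eq_pow_sum]
  refine Finset.prod_congr rfl fun i _ => ?_
  rw [Nat.card_pi, ← Finset.prod_pow_eq_pow_sum]
  refine Finset.prod_congr rfl fun j _ => ?_
  rw [Nat.card_pi]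
  have := CardFixedAux.count_fin (F := F) (τ j) (τ i)
  rw [Finset.prod_congr rfl fun t _ => this, Finset.prod_const, Finset.card_univ,
    Fintype.card_fin, ← pow_mul, CardFixedAux.pairMin_comm (τ j) (τ i), mul_comm]
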